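/- If f is a characteristic function whose essential support S_f = {x : f(x) ≠ 0} is connected (i.e., has exactly one connected component), then for every integer n ≥ 2, the only characteristic function g with g^n = f^n is g = f. -/

import Mathlib

open MeasureTheory Set

/-- The characteristic function of a measure `μ` on `ℝ`: `x ↦ ∫ e^{ixt} dμ(t)`. -/
noncomputable def charFunOf (μ : Measure ℝ) : ℝ → ℂ :=
  fun x => ∫ t, Complex.exp (x * t * Complex.I) ∂μ

/-- `f` is the characteristic function of some probability measure on `ℝ`. -/
def IsCharFun (f : ℝ → ℂ) : Prop :=
  ∃ μ : Measure ℝ, IsProbabilityMeasure μ ∧ f = charFunOf μ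

/-! On the support of `f` the ratio `g / f` is continuous and takes values in the finite set of
`n`-th roots of unity, so it is constant on the connected support; it equals `1` at `0`, where both
characteristic functions are `1`. Off the support, `g ^ n = 0` forces `g = 0`. -/

theorem IsPreconnected.eqOn_of_pow_eq {α 𝕜 : Type*} [TopologicalSpace α] [TopologicalSpace 𝕜]
    [T1Space 𝕜] [Field 𝕜] [ContinuousInv₀ 𝕜] [ContinuousMul 𝕜] {f g : α → 𝕜} {S : Set α}
    {n : ℕ} {x₀ : α} (hS : IsPreconnected S) (hf : ContinuousOn f S) (hg : ContinuousOn g S)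
    (hpow : EqOn (f ^ n) (g ^ n) S) (hg_ne : ∀ {x : α}, x ∈ S → g x ≠ 0) (hn : n ≠ 0)
    (hx₀ : x₀ ∈ S) (heq : f x₀ = g x₀) : EqOn f g S := by
  classical
  have hroots : MapsTo (f / g) S (Polynomial.nthRoots n (1 : 𝕜)).toFinset := fun x hx => by
    simpa [Polynomial.mem_nthRoots (Nat.pos_of_ne_zero hn), div_pow,
      div_eq_one_iff_eq (pow_ne_zero _ (hg_ne hx))] using hpow hx
  intro x hx
  have hconst := hS.constant_of_mapsTo (Finset.finite_toSet _).isDiscrete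
    (hf.div hg fun _ => hg_ne) hroots hx hx₀
  rwa [Pi.div_apply, Pi.div_apply, heq, div_self (hg_ne hx₀), div_eq_one_iff_eq (hg_ne hx)]
    at hconst

lemma charFunOf_eq_charFun (μ : Measure ℝ) : charFunOf μ = charFun μ :=
  funext fun x => (charFun_apply_real x).symm

namespace IsCharFun

variable {f : ℝ → ℂ}

lemma continuous (hf : IsCharFun f) : Continuous f := by
  obtain ⟨μ, _, rfl⟩ := hf
  rw [charFunOf_eq_charFun]
  exact continuous_charFun

lemma map_zero (hf : IsCharFun f) : f 0 = 1 := by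
  obtain ⟨μ, _, rfl⟩ := hf
  simp [charFunOf_eq_charFun]

end IsCharFun

/-- If the essential support of a characteristic function `f` is connected, then
`C_n(f)` is trivial for every `n ≥ 2`. -/
theorem stmt8 (f : ℝ → ℂ) (hf : IsCharFun f) (hconn : IsConnected {x : ℝ | f x ≠ 0}) :
    ∀ n : ℕ, 2 ≤ n → ∀ g : ℝ → ℂ, IsCharFun g → (∀ x, g x ^ n = f x ^ n) → g = f := by
  intro n hn g hg hgf
  have hn0 : n ≠ 0 := by omega
  funext x
  by_cases hx : f x = 0
  · rw [hx, ← pow_eq_zero_iff hn0, hgf x, hx, zero_pow hn0]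
  · have h0 : f 0 ≠ 0 := by simp [hf.map_zero]
    exact hconn.isPreconnected.eqOn_of_pow_eq hg.continuous.continuousOn
      hf.continuous.continuousOn (fun y _ => hgf y) id hn0 h0
      (by rw [hf.map_zero, hg.map_zero]) hx
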